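/- arXiv:1510.05799 — 5 statements merged into one kernel-verified Lean document; each statement's English description precedes it below -/
import Mathlib

section
/- For all n ≥ 0 and k > 0, the restricted Stirling numbers of the second kind satisfy S≤m(n+1, k) = k · S≤m(n, k) + S≤m(n, k−1) − C(n, m) · S≤m(n−m, k−1), where the last term is taken to be 0 if n < m. -/
/-- Restricted Stirling number of the second kind: partitions of an `n`-set
into `k` blocks, each of size at most `m`. -/
noncomputable def restStirling (m n k : ℕ) : ℕ :=
  Nat.card {P : Finpartition (Finset.univ : Finset (Fin n)) //
    P.parts.card = k ∧ ∀ b ∈ P.parts, b.card ≤ m}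

/-- Associated Stirling number of the second kind: partitions of an `n`-set
into `k` blocks, each of size at least `m`. -/
noncomputable def assocStirling (m n k : ℕ) : ℕ :=
  Nat.card {P : Finpartition (Finset.univ : Finset (Fin n)) //
    P.parts.card = k ∧ ∀ b ∈ P.parts, m ≤ b.card}

/-- Ordinary Stirling number of the second kind. -/
noncomputable def ordStirling (n k : ℕ) : ℕ :=
  Nat.card {P : Finpartition (Finset.univ : Finset (Fin n)) // P.parts.card = k}

/-!
Removing a marked block `X` from a partition of `s` into `k` blocks of size at most `m` leaves
such a partition of `s \ X` into `k - 1` blocks. Marking the block of a new element `a` (so that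
`X = insert a B` with `B ⊆ s`), resp. an arbitrary block, gives with `g B = S≤m(s \ B, k - 1)`
  `S≤m(insert a s, k) = ∑_{B ⊆ s, |B| < m} g B`  and  `k S≤m(s, k) = ∑_{B ⊆ s, 0 < |B| ≤ m} g B`,
whose difference is `g ∅ - ∑_{|B| = m} g B`. That the counts depend only on `|s|` follows from
the first identity by strong induction on `s`.
-/

open Finset

namespace Finpartition

variable {α : Type*} [GeneralizedBooleanAlgebra α] [DecidableEq α] {a b c : α}

theorem parts_avoid_of_mem (P : Finpartition a) (hb : b ∈ P.parts) :
    (P.avoid b).parts = P.parts.erase b := by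
  ext c
  rw [mem_avoid, mem_erase]
  constructor
  · rintro ⟨d, hd, hdb, rfl⟩
    have hne : d ≠ b := by rintro rfl; exact hdb le_rfl
    have hdisj : Disjoint d b := P.disjoint hd hb hne
    rw [hdisj.sdiff_eq_left]
    exact ⟨hne, hd⟩
  · rintro ⟨hne, hc⟩
    have hdisj : Disjoint c b := P.disjoint hc hb hne
    exact ⟨c, hc, fun hle ↦ P.ne_bot hc (hdisj.eq_bot_of_le hle), hdisj.sdiff_eq_left⟩

theorem parts_avoid_extend (P : Finpartition a) (hb : b ≠ ⊥) (hab : Disjoint a b)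
    (hc : a ⊔ b = c) : ((P.extend hb hab hc).avoid b).parts = P.parts := by
  rw [parts_avoid_of_mem _ (mem_insert_self b _), extend_parts,
    erase_insert fun h ↦ hb (hab.symm.eq_bot_of_le (P.le h))]

theorem extend_avoid (P : Finpartition c) (hb : b ∈ P.parts) :
    (P.avoid b).extend (P.ne_bot hb) disjoint_sdiff_self_left (sdiff_sup_cancel (P.le hb)) = P := by
  ext1
  rw [extend_parts, parts_avoid_of_mem P hb, insert_erase hb]

end Finpartition

theorem Finset.powerset_map {α β : Type*} (f : α ↪ β) (s : Finset α) :
    (s.map f).powerset = s.powerset.map (mapEmbedding f).toEmbedding := by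
  ext t
  simp [subset_map_iff, eq_comm]

variable {α β : Type*} [DecidableEq α] [DecidableEq β]

abbrev RestPartition (m k : ℕ) (s : Finset α) : Type _ :=
  {P : Finpartition s // #P.parts = k ∧ ∀ b ∈ P.parts, #b ≤ m}

abbrev MarkedRestPartition (m k : ℕ) (s : Finset α) (p : Finset α → Prop) : Type _ :=
  {x : Finpartition s × Finset α //
    (#x.1.parts = k ∧ ∀ b ∈ x.1.parts, #b ≤ m) ∧ x.2 ∈ x.1.parts ∧ p x.2}

noncomputable def restCount (m k : ℕ) (s : Finset α) : ℕ :=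
  Nat.card (RestPartition m k s)

theorem restCount_univ_fin (m n k : ℕ) :
    restCount m k (univ : Finset (Fin n)) = restStirling m n k := rfl

variable {m k : ℕ} {s : Finset α} {a : α}

theorem restCount_empty : restCount m k (∅ : Finset α) = if k = 0 then 1 else 0 := by
  have hP (P : Finpartition (∅ : Finset α)) : P.parts = ∅ := P.parts_eq_empty_iff.2 rfl
  simp only [restCount, RestPartition, hP, card_empty, notMem_empty, IsEmpty.forall_iff,
    implies_true, and_true]
  split_ifs with hk
  · subst hk
    simpa using Fintype.card_eq_one_iff.2 ⟨⊥, fun P ↦ Finpartition.ext (by rw [hP, hP])⟩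
  · simp [Ne.symm hk]

theorem restCount_zero_of_nonempty (hs : s.Nonempty) : restCount m 0 s = 0 :=
  Nat.card_eq_zero.2 <| .inl
    ⟨fun ⟨P, hP, _⟩ ↦ hs.ne_empty (P.parts_eq_empty_iff.1 (card_eq_zero.1 hP))⟩

theorem card_markedRestPartition (p : Finset α → Prop) [DecidablePred p] :
    Nat.card (MarkedRestPartition m (k + 1) s p) =
      ∑ X ∈ s.powerset with X.Nonempty ∧ #X ≤ m ∧ p X, restCount m k (s \ X) := by
  let e : MarkedRestPartition m (k + 1) s p ≃
      Σ X : {X // X ∈ s.powerset.filter fun X ↦ X.Nonempty ∧ #X ≤ m ∧ p X},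
        RestPartition m k (s \ X.1) :=
    { toFun := fun x ↦
        ⟨⟨x.1.2, mem_filter.2 ⟨mem_powerset.2 (x.1.1.le x.2.2.1),
            x.1.1.nonempty_of_mem_parts x.2.2.1, x.2.1.2 _ x.2.2.1, x.2.2.2⟩⟩,
          ⟨x.1.1.avoid x.1.2, by
            rw [x.1.1.parts_avoid_of_mem x.2.2.1, card_erase_of_mem x.2.2.1, x.2.1.1]; rfl,
            fun b hb ↦ x.2.1.2 b (mem_of_mem_erase (x.1.1.parts_avoid_of_mem x.2.2.1 ▸ hb))⟩⟩
      invFun := fun y ↦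
        have hX := mem_filter.1 y.1.2
        ⟨(y.2.1.extend hX.2.1.ne_empty disjoint_sdiff_self_left
            (sdiff_sup_cancel (mem_powerset.1 hX.1)), y.1.1),
          ⟨by rw [y.2.1.card_extend, y.2.2.1], forall_mem_insert .. |>.2 ⟨hX.2.2.1, y.2.2.2⟩⟩,
          mem_insert_self _ _, hX.2.2.2⟩
      left_inv := fun x ↦ Subtype.ext (Prod.ext (x.1.1.extend_avoid x.2.2.1) rfl)
      right_inv := fun y ↦
        Sigma.ext rfl <| heq_of_eq <| Subtype.ext <| Finpartition.ext <| by
          dsimp only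
          exact y.2.1.parts_avoid_extend .. }
  rw [Nat.card_congr e, Nat.card_sigma]
  exact sum_coe_sort _ fun X ↦ restCount m k (s \ X)

theorem card_markedRestPartition_true :
    Nat.card (MarkedRestPartition m k s fun _ ↦ True) = k * restCount m k s := by
  let e : MarkedRestPartition m k s (fun _ ↦ True) ≃ Σ P : RestPartition m k s, P.1.parts :=
    { toFun := fun x ↦ ⟨⟨x.1.1, x.2.1⟩, ⟨x.1.2, x.2.2.1⟩⟩
      invFun := fun y ↦ ⟨(y.1.1, y.2.1), y.1.2, y.2.2, trivial⟩
      left_inv := fun _ ↦ rfl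
      right_inv := fun _ ↦ rfl }
  rw [Nat.card_congr e, Nat.card_sigma]
  simp only [Nat.card_eq_finsetCard]
  rw [sum_congr rfl fun P _ ↦ P.2.1, sum_const, card_univ, smul_eq_mul, mul_comm, restCount,
    Nat.card_eq_fintype_card]

theorem succ_mul_restCount :
    (k + 1) * restCount m (k + 1) s =
      ∑ X ∈ s.powerset with X.Nonempty ∧ #X ≤ m, restCount m k (s \ X) := by
  rw [← card_markedRestPartition_true, card_markedRestPartition]
  simp only [and_true]

theorem restCount_eq_card_markedRestPartition_mem (ha : a ∈ s) :
    restCount m k s = Nat.card (MarkedRestPartition m k s (a ∈ ·)) :=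
  Nat.card_congr
    { toFun := fun P ↦ ⟨(P.1, P.1.part a), P.2, P.1.part_mem.2 ha, P.1.mem_part_self.2 ha⟩
      invFun := fun x ↦ ⟨x.1.1, x.2.1⟩
      left_inv := fun _ ↦ rfl
      right_inv := fun x ↦ Subtype.ext (Prod.ext rfl (x.1.1.part_eq_of_mem x.2.2.1 x.2.2.2)) }

theorem restCount_insert (ha : a ∉ s) :
    restCount m (k + 1) (insert a s) = ∑ B ∈ s.powerset with #B < m, restCount m k (s \ B) := by
  rw [restCount_eq_card_markedRestPartition_mem (mem_insert_self a s),
    card_markedRestPartition (a ∈ ·), sum_filter, sum_powerset_insert ha, sum_filter,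
    sum_eq_zero fun B hB ↦ if_neg fun h ↦ ha (mem_powerset.1 hB h.2.2), zero_add]
  refine sum_congr rfl fun B hB ↦ ?_
  have haB : a ∉ B := fun h ↦ ha (mem_powerset.1 hB h)
  simp [card_insert_of_notMem haB, insert_sdiff_insert, sdiff_insert_of_notMem ha]

theorem restCount_map (f : α ↪ β) (s : Finset α) (k : ℕ) :
    restCount m k (s.map f) = restCount m k s := by
  induction s using Finset.strongInduction generalizing k with
  | H s ih =>
  obtain rfl | ⟨a, ha⟩ := s.eq_empty_or_nonempty
  · rw [map_empty, restCount_empty, restCount_empty]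
  cases k with
  | zero =>
    rw [restCount_zero_of_nonempty ⟨a, ha⟩, restCount_zero_of_nonempty ⟨f a, mem_map_of_mem f ha⟩]
  | succ k =>
    rw [← insert_erase ha, map_insert, restCount_insert (by simp),
      restCount_insert (notMem_erase a s), powerset_map, filter_map, sum_map]
    refine sum_congr (by simp) fun B _ ↦ ?_
    rw [RelEmbedding.coe_toEmbedding, mapEmbedding_apply, ← Finset.map_sdiff,
      ih _ (sdiff_subset.trans_ssubset (erase_ssubset ha))]

theorem restCount_eq_restStirling (s : Finset α) (k : ℕ) :
    restCount m k s = restStirling m #s k := by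
  let e : Fin #s ↪ α := s.equivFin.symm.toEmbedding.trans (Function.Embedding.subtype (· ∈ s))
  have hs : univ.map e = s := by
    ext x
    simp only [mem_map, mem_univ, true_and]
    exact ⟨fun ⟨i, hi⟩ ↦ hi ▸ (s.equivFin.symm i).2, fun hx ↦ ⟨s.equivFin ⟨x, hx⟩, by simp [e]⟩⟩
  rw [← restCount_univ_fin, ← restCount_map e, hs]

theorem restCount_insert_add_sum_powersetCard (hm : 1 ≤ m) (ha : a ∉ s) :
    restCount m (k + 1) (insert a s) + ∑ B ∈ s.powersetCard m, restCount m k (s \ B) =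
      restCount m k s + (k + 1) * restCount m (k + 1) s := by
  have hempty : restCount m k s =
      ∑ B ∈ s.powerset, if B = ∅ then restCount m k (s \ B) else 0 := by
    rw [sum_ite_eq', if_pos (empty_mem_powerset s), sdiff_empty]
  rw [restCount_insert ha, succ_mul_restCount, powersetCard_eq_filter, sum_filter, sum_filter,
    sum_filter, ← sum_add_distrib, hempty, ← sum_add_distrib]
  refine sum_congr rfl fun B _ ↦ ?_
  obtain rfl | hB := B.eq_empty_or_nonempty
  · simp only [card_empty, sdiff_empty, if_true, Finset.not_nonempty_empty, false_and, if_false,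
      add_zero]
    split_ifs <;> omega
  · simp only [hB, hB.ne_empty, if_false, true_and, zero_add]
    split_ifs <;> omega

theorem restStirling_recurrence (m : ℕ) (hm : 1 ≤ m) (n k : ℕ) (hk : 0 < k) :
    (restStirling m (n + 1) k : ℤ) =
      k * restStirling m n k + restStirling m n (k - 1)
        - n.choose m * restStirling m (n - m) (k - 1) := by
  obtain ⟨k, rfl⟩ : ∃ j, k = j + 1 := ⟨k - 1, by omega⟩
  set s : Finset (Fin (n + 1)) := univ.erase 0
  have hs : #s = n := by simp [s]
  have hsum : ∑ B ∈ s.powersetCard m, restCount m k (s \ B) =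
      n.choose m * restStirling m (n - m) k := by
    rw [sum_congr rfl fun B hB ↦ by
      rw [restCount_eq_restStirling, card_sdiff_of_subset (mem_powersetCard.1 hB).1,
        (mem_powersetCard.1 hB).2, hs],
      sum_const, card_powersetCard, hs, smul_eq_mul]
  have key := restCount_insert_add_sum_powersetCard (k := k) (s := s) hm (notMem_erase 0 univ)
  rw [show insert 0 s = univ from insert_erase (mem_univ _), hsum] at key
  simp only [restCount_eq_restStirling, card_univ, Fintype.card_fin, hs] at key
  push_cast [Nat.add_sub_cancel]
  linarith [congrArg (Nat.cast : ℕ → ℤ) key]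
end

section
/- For n ≥ 4: if m ≥ 3 then S≤m(n, n−2) = ((3n−5)/4) · C(n, 3), and if m = 2 then S≤2(n, n−2) = 3 · C(n, 4). -/
open Finset

variable {α : Type*}

lemma eq_singleton_of_mem_of_not_one_lt {b : Finset α} {x : α} (hx : x ∈ b) (h : ¬1 < #b) :
    b = {x} :=
  eq_singleton_iff_unique_mem.2 ⟨hx, fun _ hy => card_le_one.1 (not_lt.1 h) _ hy _ hx⟩

variable [DecidableEq α]

def IsNontrivialBlocks (u : Finset (Finset α)) : Prop :=
  (u : Set (Finset α)).PairwiseDisjoint id ∧ ∀ b ∈ u, 1 < #b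

namespace Finpartition

variable [Fintype α]

def nontrivialParts (P : Finpartition (univ : Finset α)) : Finset (Finset α) :=
  {b ∈ P.parts | 1 < #b}

lemma isNontrivialBlocks_nontrivialParts (P : Finpartition (univ : Finset α)) :
    IsNontrivialBlocks P.nontrivialParts :=
  ⟨P.disjoint.subset (coe_subset.2 (filter_subset _ _)), fun _ hb => (mem_filter.1 hb).2⟩

def ofNontrivialBlocks (u : Finset (Finset α)) (hu : IsNontrivialBlocks u) :
    Finpartition (univ : Finset α) where
  parts := u ∪ (⊥ : Finpartition (univ \ u.sup id)).parts
  supIndep := by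
    rw [supIndep_iff_pairwiseDisjoint, coe_union, Set.pairwiseDisjoint_union]
    refine ⟨hu.1, Finpartition.disjoint _, fun b hb c hc _ => ?_⟩
    obtain ⟨x, hx, rfl⟩ := mem_bot_iff.1 hc
    exact disjoint_singleton_right.2 fun hxb => (mem_sdiff.1 hx).2 (mem_sup.2 ⟨b, hb, hxb⟩)
  sup_parts := by simp [sup_union]
  bot_notMem := by
    rw [mem_union, not_or]
    exact ⟨fun h => by simpa using hu.2 _ h, Finpartition.bot_notMem _⟩

lemma parts_ofNontrivialBlocks (u : Finset (Finset α)) (hu : IsNontrivialBlocks u) :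
    (ofNontrivialBlocks u hu).parts = u ∪ (⊥ : Finpartition (univ \ u.sup id)).parts :=
  rfl

lemma nontrivialParts_ofNontrivialBlocks (u : Finset (Finset α)) (hu : IsNontrivialBlocks u) :
    (ofNontrivialBlocks u hu).nontrivialParts = u := by
  rw [nontrivialParts, parts_ofNontrivialBlocks, filter_union, filter_true_of_mem hu.2,
    filter_false_of_mem, union_empty]
  simp

lemma ofNontrivialBlocks_nontrivialParts (P : Finpartition (univ : Finset α)) :
    ofNontrivialBlocks P.nontrivialParts P.isNontrivialBlocks_nontrivialParts = P := by
  apply Finpartition.ext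
  ext b
  simp only [parts_ofNontrivialBlocks, nontrivialParts, mem_union, mem_filter, mem_bot_iff,
    mem_sdiff, mem_univ, true_and, mem_sup, id_eq, not_exists, not_and]
  constructor
  · rintro (⟨hb, -⟩ | ⟨x, hx, rfl⟩)
    · exact hb
    · obtain ⟨c, hc, hxc⟩ := P.exists_mem (mem_univ x)
      by_cases h : 1 < #c
      · exact absurd hxc (hx c ⟨hc, h⟩)
      · rwa [← eq_singleton_of_mem_of_not_one_lt hxc h]
  · intro hb
    by_cases h : 1 < #b
    · exact Or.inl ⟨hb, h⟩
    · obtain ⟨x, hx⟩ := P.nonempty_of_mem_parts hb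
      refine Or.inr ⟨x, fun c ⟨hc, hc1⟩ hxc => h ?_, (eq_singleton_of_mem_of_not_one_lt hx h).symm⟩
      rwa [P.eq_of_mem_parts hb hc hx hxc]

def equivNontrivialBlocks :
    Finpartition (univ : Finset α) ≃ {u : Finset (Finset α) // IsNontrivialBlocks u} where
  toFun P := ⟨P.nontrivialParts, P.isNontrivialBlocks_nontrivialParts⟩
  invFun u := ofNontrivialBlocks u.1 u.2
  left_inv := ofNontrivialBlocks_nontrivialParts
  right_inv u := Subtype.ext (nontrivialParts_ofNontrivialBlocks u.1 u.2)

lemma card_parts_add_sum_nontrivialParts (P : Finpartition (univ : Finset α)) :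
    #P.parts + ∑ b ∈ P.nontrivialParts, (#b - 1) = Fintype.card α := by
  rw [nontrivialParts, sum_filter_of_ne fun b _ h => by omega, card_eq_sum_ones,
    ← sum_add_distrib, ← card_univ, ← P.sum_card_parts]
  refine sum_congr rfl fun b hb => ?_
  have := card_pos.2 (P.nonempty_of_mem_parts hb)
  omega

lemma forall_card_parts_le_iff (P : Finpartition (univ : Finset α)) {m : ℕ} (hm : 1 ≤ m) :
    (∀ b ∈ P.parts, #b ≤ m) ↔ ∀ b ∈ P.nontrivialParts, #b ≤ m := by
  refine ⟨fun h b hb => h b (mem_filter.1 hb).1, fun h b hb => ?_⟩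
  by_cases hb1 : 1 < #b
  · exact h b (mem_filter.2 ⟨hb, hb1⟩)
  · omega

end Finpartition

lemma IsNontrivialBlocks.eq_singleton_or_eq_pair_of_sum_eq_two {u : Finset (Finset α)}
    (hu : IsNontrivialBlocks u) (hsum : ∑ b ∈ u, (#b - 1) = 2) :
    (∃ t, #t = 3 ∧ u = {t}) ∨ ∃ a b, Disjoint a b ∧ #a = 2 ∧ #b = 2 ∧ u = {a, b} := by
  have hcard : #u ≤ 2 := by
    rw [← hsum, card_eq_sum_ones]
    exact sum_le_sum fun b hb => by have := hu.2 b hb; omega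
  interval_cases h : #u
  · simp [card_eq_zero.1 h] at hsum
  · obtain ⟨t, rfl⟩ := card_eq_one.1 h
    exact Or.inl ⟨t, by simp at hsum; omega, rfl⟩
  · obtain ⟨a, b, hab, rfl⟩ := card_eq_two.1 h
    have ha := hu.2 a (by simp)
    have hb := hu.2 b (by simp)
    rw [sum_pair hab] at hsum
    exact Or.inr ⟨a, b, hu.1 (by simp) (by simp) hab, by omega, by omega, rfl⟩

lemma isNontrivialBlocks_sum_eq_two_iff {u : Finset (Finset α)} {m : ℕ} :
    (IsNontrivialBlocks u ∧ ∑ b ∈ u, (#b - 1) = 2 ∧ ∀ b ∈ u, #b ≤ m) ↔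
      (3 ≤ m ∧ ∃ t, #t = 3 ∧ u = {t}) ∨
        (2 ≤ m ∧ ∃ a b, Disjoint a b ∧ #a = 2 ∧ #b = 2 ∧ u = {a, b}) := by
  constructor
  · rintro ⟨hu, hsum, hm⟩
    rcases hu.eq_singleton_or_eq_pair_of_sum_eq_two hsum with
      ⟨t, ht, rfl⟩ | ⟨a, b, hab, ha, hb, rfl⟩
    · exact Or.inl ⟨ht ▸ hm t (mem_singleton_self t), t, ht, rfl⟩
    · exact Or.inr ⟨ha ▸ hm a (mem_insert_self a _), a, b, hab, ha, hb, rfl⟩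
  · rintro (⟨hm, t, ht, rfl⟩ | ⟨hm, a, b, hab, ha, hb, rfl⟩)
    · refine ⟨⟨by simp, by simp [ht]⟩, by simp [ht], by simp [ht, hm]⟩
    · have hne : a ≠ b := hab.ne (card_pos.1 (by omega)).ne_empty
      refine ⟨⟨?_, ?_⟩, by simp [sum_pair hne, ha, hb], ?_⟩
      · rw [coe_pair]
        exact (Set.pairwiseDisjoint_singleton b id).insert
          fun c hc _ => by rwa [Set.mem_singleton_iff.1 hc]
      · simp [ha, hb]
      · simp [ha, hb, hm]

def pairings (t : Finset α) : Finset (Finset (Finset α)) :=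
  (t.powersetCard 2).image fun a => {a, t \ a}

lemma sup_eq_of_mem_pairings {t : Finset α} {u : Finset (Finset α)} (hu : u ∈ pairings t) :
    u.sup id = t := by
  obtain ⟨a, ha, rfl⟩ := mem_image.1 hu
  simpa using (mem_powersetCard.1 ha).1

lemma card_pairings {t : Finset α} (ht : #t = 4) : #(pairings t) = 3 := by
  -- `a ↦ {a, t \ a}` is two-to-one on the six `2`-subsets of `t`: `a` and `t \ a` have one image.
  have hfiber : ∀ u ∈ pairings t,
      #{a ∈ t.powersetCard 2 | ({a, t \ a} : Finset (Finset α)) = u} = 2 := by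
    simp only [pairings, forall_mem_image, mem_powersetCard]
    rintro a₀ ⟨ha₀t, ha₀⟩
    have hne : a₀ ≠ t \ a₀ := disjoint_sdiff.ne (card_pos.1 (by omega)).ne_empty
    have hfib : {a ∈ t.powersetCard 2 | ({a, t \ a} : Finset (Finset α)) = {a₀, t \ a₀}} =
        {a₀, t \ a₀} := by
      ext a
      simp only [mem_filter, mem_powersetCard, mem_insert, mem_singleton]
      constructor
      · rintro ⟨-, h⟩
        have ha : a ∈ ({a₀, t \ a₀} : Finset (Finset α)) := h ▸ mem_insert_self a _
        simpa using ha
      · rintro (rfl | rfl)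
        · exact ⟨⟨ha₀t, ha₀⟩, rfl⟩
        · refine ⟨⟨sdiff_subset, by rw [card_sdiff_of_subset ha₀t]; omega⟩, ?_⟩
          rw [Finset.sdiff_sdiff_eq_self ha₀t, pair_comm]
    rw [hfib, card_pair hne]
  have hsum := card_eq_sum_card_image (fun a => ({a, t \ a} : Finset (Finset α))) (t.powersetCard 2)
  rw [card_powersetCard, ht, ← pairings, sum_congr rfl hfiber, sum_const, smul_eq_mul] at hsum
  rw [show (4 : ℕ).choose 2 = 6 from rfl] at hsum
  omega

variable [Fintype α]

variable (α) in
def disjointPairPairs : Finset (Finset (Finset α)) :=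
  (univ.powersetCard 4).biUnion pairings

lemma mem_disjointPairPairs {u : Finset (Finset α)} :
    u ∈ disjointPairPairs α ↔ ∃ a b, Disjoint a b ∧ #a = 2 ∧ #b = 2 ∧ u = {a, b} := by
  simp only [disjointPairPairs, pairings, mem_biUnion, mem_image, mem_powersetCard, subset_univ,
    true_and]
  constructor
  · rintro ⟨t, ht, a, ⟨hat, ha⟩, rfl⟩
    exact ⟨a, t \ a, disjoint_sdiff, ha, by rw [card_sdiff_of_subset hat]; omega, rfl⟩
  · rintro ⟨a, b, hab, ha, hb, rfl⟩
    exact ⟨a ∪ b, by rw [card_union_of_disjoint hab]; omega, a, ⟨subset_union_left, ha⟩,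
      by rw [union_sdiff_cancel_left hab]⟩

lemma card_disjointPairPairs : #(disjointPairPairs α) = 3 * (Fintype.card α).choose 4 := by
  rw [disjointPairPairs, card_biUnion,
    sum_congr rfl fun t ht => card_pairings (mem_powersetCard.1 ht).2, sum_const, smul_eq_mul,
    card_powersetCard, card_univ, mul_comm]
  intro t _ t' _ htt'
  exact disjoint_left.2 fun u hu hu' =>
    htt' ((sup_eq_of_mem_pairings hu).symm.trans (sup_eq_of_mem_pairings hu'))

lemma card_finpartition_eq_card_nontrivialBlocks {k m : ℕ} (hk : k ≤ Fintype.card α)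
    (hm : 1 ≤ m) :
    Nat.card {P : Finpartition (univ : Finset α) // #P.parts = k ∧ ∀ b ∈ P.parts, #b ≤ m} =
      Nat.card {u : Finset (Finset α) // IsNontrivialBlocks u ∧
        ∑ b ∈ u, (#b - 1) = Fintype.card α - k ∧ ∀ b ∈ u, #b ≤ m} :=
  Nat.card_congr <| (Finpartition.equivNontrivialBlocks.subtypeEquiv fun P =>
      and_congr (by
          change _ ↔ ∑ b ∈ P.nontrivialParts, (#b - 1) = _
          have := P.card_parts_add_sum_nontrivialParts
          omega)
        (P.forall_card_parts_le_iff hm)).trans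
    (Equiv.subtypeSubtypeEquivSubtypeInter _ _)

theorem card_finpartition_card_sub_two_of_three_le {m : ℕ} (hα : 2 ≤ Fintype.card α)
    (hm : 3 ≤ m) :
    Nat.card {P : Finpartition (univ : Finset α) //
        #P.parts = Fintype.card α - 2 ∧ ∀ b ∈ P.parts, #b ≤ m} =
      (Fintype.card α).choose 3 + 3 * (Fintype.card α).choose 4 := by
  let triples : Finset (Finset (Finset α)) :=
    (univ.powersetCard 3).map ⟨singleton, singleton_injective⟩
  have hdisj : Disjoint triples (disjointPairPairs α) := by
    refine disjoint_left.2 fun u hu hu' => ?_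
    obtain ⟨t, -, rfl⟩ := mem_map.1 hu
    obtain ⟨a, b, hab, ha, -, h⟩ := mem_disjointPairPairs.1 hu'
    have hcard := congrArg card h
    rw [card_pair (hab.ne (card_pos.1 (by omega)).ne_empty)] at hcard
    simp at hcard
  rw [card_finpartition_eq_card_nontrivialBlocks (by omega) (by omega), Nat.sub_sub_self hα,
    ← card_disjointPairPairs, ← card_univ, ← card_powersetCard,
    ← card_map ⟨singleton, singleton_injective⟩, ← card_union_of_disjoint hdisj,
    ← Nat.card_eq_finsetCard]
  refine Nat.card_congr (Equiv.subtypeEquivRight fun u => ?_)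
  rw [isNontrivialBlocks_sum_eq_two_iff, mem_union, mem_disjointPairPairs]
  simp [hm, (by omega : 2 ≤ m), triples, eq_comm]

theorem card_finpartition_card_sub_two_le_two (hα : 2 ≤ Fintype.card α) :
    Nat.card {P : Finpartition (univ : Finset α) //
        #P.parts = Fintype.card α - 2 ∧ ∀ b ∈ P.parts, #b ≤ 2} =
      3 * (Fintype.card α).choose 4 := by
  rw [card_finpartition_eq_card_nontrivialBlocks (by omega) (by omega), Nat.sub_sub_self hα,
    ← card_disjointPairPairs, ← Nat.card_eq_finsetCard]
  refine Nat.card_congr (Equiv.subtypeEquivRight fun u => ?_)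
  rw [isNontrivialBlocks_sum_eq_two_iff, mem_disjointPairPairs]
  simp

lemma cast_choose_three_add_three_mul_choose_four (n : ℕ) :
    ((n.choose 3 + 3 * n.choose 4 : ℕ) : ℚ) = (3 * n - 5) / 4 * n.choose 3 := by
  rcases lt_or_ge n 3 with hn | hn
  · simp [Nat.choose_eq_zero_of_lt hn, Nat.choose_eq_zero_of_lt (by omega : n < 4)]
  · have h : (n.choose 4 * 4 : ℚ) = n.choose 3 * (n - 3) := by
      exact_mod_cast Nat.choose_succ_right_eq n 3
    push_cast
    linarith

theorem restStirling_sub_two (m n : ℕ) (hn : 4 ≤ n) :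
    (3 ≤ m → (restStirling m n (n - 2) : ℚ) = (3 * n - 5) / 4 * n.choose 3) ∧
    restStirling 2 n (n - 2) = 3 * n.choose 4 := by
  have hcard : 2 ≤ Fintype.card (Fin n) := by rw [Fintype.card_fin]; omega
  refine ⟨fun hm => ?_, ?_⟩
  · have h := card_finpartition_card_sub_two_of_three_le hcard hm
    rw [Fintype.card_fin] at h
    rw [restStirling, h, cast_choose_three_add_three_mul_choose_four]
  · have h := card_finpartition_card_sub_two_le_two hcard
    rwa [Fintype.card_fin] at h
end

section
/- For any prime p, any m ≥ 2, and any k ≥ 2, the associated Stirling number satisfies S≥m(p, k) ≡ 0 (mod p); moreover S≥m(p, 1) = 1 for m ≤ p. -/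
/-! Rotation `i ↦ i + 1` of `Fin p` generates a cyclic group of order `p`, which permutes the
partitions counted by `assocStirling m p k`; so their number is congruent mod `p` to the number
of rotation-invariant ones. An invariant partition whose blocks have at least `2` elements has
fewer than `p` blocks, so the orbit of each block under the `p`-group has fewer than `p`, hence
exactly one, element. Every block is then a nonempty rotation-invariant set, i.e. all of
`Fin p`, and there is only one block. -/

open Finset MulAction Pointwise

namespace Finset

variable {G α : Type*} [Group G] [MulAction G α] [DecidableEq α]

def smulFinsetOrderIso (g : G) : Finset α ≃o Finset α where
  toEquiv := MulAction.toPerm g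
  map_rel_iff' := smul_finset_subset_smul_finset_iff

theorem eq_univ_of_forall_smul_finset_eq [Fintype α] [IsPretransitive G α] {b : Finset α}
    (hb : b.Nonempty) (h : ∀ g : G, g • b = b) : b = univ := by
  obtain ⟨x, hx⟩ := hb
  refine eq_univ_of_forall fun y => ?_
  obtain ⟨g, rfl⟩ := exists_smul_eq G x y
  rw [← h g]
  exact smul_mem_smul_finset hx

end Finset

theorem Equiv.Perm.IsCycle.isPretransitive_zpowers {α : Type*} [Fintype α] [DecidableEq α]
    {σ : Equiv.Perm α} (hσ : σ.IsCycle) (hsupp : σ.support = univ) :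
    IsPretransitive (Subgroup.zpowers σ) α := by
  refine ⟨fun x y => ?_⟩
  have hmoves : ∀ z, σ z ≠ z := fun z => Equiv.Perm.mem_support.1 (hsupp ▸ mem_univ z)
  obtain ⟨i, hi⟩ := hσ.exists_zpow_eq (hmoves x) (hmoves y)
  exact ⟨⟨σ ^ i, Subgroup.zpow_mem_zpowers σ i⟩, hi⟩

theorem IsPGroup.mem_fixedPoints_of_card_orbit_lt {p : ℕ} [Fact p.Prime] {G α : Type*} [Group G]
    [MulAction G α] (hG : IsPGroup p G) {a : α} [Finite (orbit G a)]
    (h : Nat.card (orbit G a) < p) : a ∈ fixedPoints G α := by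
  obtain ⟨n, hn⟩ := hG.card_orbit a
  have hn0 : n = 0 := by
    by_contra hn0
    exact h.not_ge (hn ▸ Nat.le_self_pow hn0 p)
  rw [← subsingleton_orbit_iff_mem_fixedPoints, ← Set.subsingleton_coe]
  exact (Nat.card_eq_one_iff_unique.1 (by rw [hn, hn0, pow_zero])).1

namespace Finpartition

theorem card_parts_mul_le {α : Type*} [DecidableEq α] {s : Finset α} (P : Finpartition s) {m : ℕ}
    (h : ∀ b ∈ P.parts, m ≤ #b) : #P.parts * m ≤ #s := by
  rw [← P.sum_card_parts]
  simpa using card_nsmul_le_sum P.parts card m h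

theorem parts_eq_singleton_of_card_parts_eq_one {α : Type*} [Lattice α] [OrderBot α] {a : α}
    (P : Finpartition a) (h : #P.parts = 1) : P.parts = {a} := by
  obtain ⟨t, ht⟩ := card_eq_one.1 h
  have hsup := P.sup_parts
  rw [ht, sup_singleton, id] at hsup
  rw [ht, hsup]

theorem assocStirling_one {m n : ℕ} (hn : 0 < n) (hmn : m ≤ n) : assocStirling m n 1 = 1 := by
  have huniv : (univ : Finset (Fin n)) ≠ ⊥ := (univ_nonempty_iff.2 ⟨⟨0, hn⟩⟩).ne_empty
  rw [assocStirling, Nat.card_eq_one_iff_exists]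
  refine ⟨⟨indiscrete huniv, by simp, by simpa⟩, fun P => Subtype.ext (Finpartition.ext ?_)⟩
  rw [parts_eq_singleton_of_card_parts_eq_one _ P.2.1, indiscrete_parts]

variable {G α : Type*} [Group G] [MulAction G α] [DecidableEq α] [Fintype α]

instance : SMul G (Finpartition (univ : Finset α)) :=
  ⟨fun g P => (P.map (smulFinsetOrderIso g)).copy smul_finset_univ⟩

@[simp]
theorem parts_smul (g : G) (P : Finpartition (univ : Finset α)) : (g • P).parts = g • P.parts := by
  show P.parts.map _ = _
  rw [map_eq_image, smul_finset_def]
  rfl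

instance : MulAction G (Finpartition (univ : Finset α)) where
  one_smul P := Finpartition.ext (by rw [parts_smul, one_smul])
  mul_smul g h P := Finpartition.ext (by simp only [parts_smul, mul_smul])

theorem card_parts_le_one_of_mem_fixedPoints {p : ℕ} [Fact p.Prime] (hG : IsPGroup p G)
    [IsPretransitive G α] {P : Finpartition (univ : Finset α)}
    (hP : P ∈ fixedPoints G (Finpartition (univ : Finset α))) (hcard : #P.parts < p) :
    #P.parts ≤ 1 := by
  have hparts : ∀ b ∈ P.parts, b = univ := by
    intro b hb
    have horbit : orbit G b ⊆ P.parts := by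
      rintro _ ⟨g, rfl⟩
      rw [mem_coe, ← hP g, parts_smul]
      exact smul_mem_smul_finset hb
    have hcard_orbit : Nat.card (orbit G b) < p := by
      refine (Nat.card_mono P.parts.finite_toSet horbit).trans_lt ?_
      rwa [Nat.card_coe_set_eq, Set.ncard_coe_finset]
    exact eq_univ_of_forall_smul_finset_eq (P.nonempty_of_mem_parts hb)
      (hG.mem_fixedPoints_of_card_orbit_lt hcard_orbit)
  exact card_le_one.2 fun a ha b hb => (hparts a ha).trans (hparts b hb).symm

variable (G α) in
def assocStirlingSubMulAction (m k : ℕ) : SubMulAction G (Finpartition (univ : Finset α)) where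
  carrier := {P | #P.parts = k ∧ ∀ b ∈ P.parts, m ≤ #b}
  smul_mem' g P := by
    rintro ⟨hk, hm⟩
    refine ⟨by rw [parts_smul, card_smul_finset, hk], ?_⟩
    simp only [parts_smul, mem_smul_finset]
    rintro _ ⟨b, hb, rfl⟩
    rw [card_smul_finset]
    exact hm b hb

theorem assocStirling_eq_card_assocStirlingSubMulAction (m n k : ℕ) :
    assocStirling m n k = Nat.card (assocStirlingSubMulAction (Equiv.Perm (Fin n)) (Fin n) m k) :=
  rfl

end Finpartition

open Finpartition in
theorem assocStirling_prime (p : ℕ) (hp : p.Prime) (m : ℕ) (hm : 2 ≤ m) :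
    (∀ k, 2 ≤ k → p ∣ assocStirling m p k) ∧ (m ≤ p → assocStirling m p 1 = 1) := by
  refine ⟨fun k hk => ?_, assocStirling_one hp.pos⟩
  have : Fact p.Prime := ⟨hp⟩
  have hcycle := isCycle_finRotate_of_le hp.two_le
  have hsupp := support_finRotate_of_le hp.two_le
  have := hcycle.isPretransitive_zpowers hsupp
  have hG : IsPGroup p (Subgroup.zpowers (finRotate p)) := IsPGroup.of_card (n := 1) <| by
    rw [Nat.card_zpowers, hcycle.orderOf, hsupp, card_univ, Fintype.card_fin, pow_one]
  -- The `SubMulAction` is taken over `Perm (Fin p)`, so that the subgroup acts on it through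
  -- `Subgroup`'s instance; over the subgroup itself the two instances would not unify.
  have hno_fixed : IsEmpty (fixedPoints (Subgroup.zpowers (finRotate p))
      (assocStirlingSubMulAction (Equiv.Perm (Fin p)) (Fin p) m k)) := by
    refine ⟨fun ⟨⟨P, hk_parts, hm_parts⟩, hP⟩ => ?_⟩
    have hsmall : #P.parts * m ≤ p := by simpa using P.card_parts_mul_le hm_parts
    have hone : #P.parts ≤ 1 :=
      card_parts_le_one_of_mem_fixedPoints hG (fun g => congrArg Subtype.val (hP g))
        (by nlinarith)
    omega
  rw [assocStirling_eq_card_assocStirlingSubMulAction, ← Nat.modEq_zero_iff_dvd]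
  simpa only [Nat.card_of_isEmpty] using hG.card_modEq_card_fixedPoints
    (assocStirlingSubMulAction (Equiv.Perm (Fin p)) (Fin p) m k)
end

section
/- As formal power series over ℚ in t, ∑_{n=0}^∞ B^{(μ)}_{n,≤m} t^n/n! · (1 − E_m(−t)) = Li_μ(1 − E_m(−t)), where B^{(μ)}_{n,≤m} = ∑_{k=0}^{n} (−1)^{n−k} k!/(k+1)^μ · S≤m(n, k), E_m(x) = ∑_{j=0}^m x^j/j!, and Li_μ(z) = ∑_{j≥1} z^j/j^μ composed formally with the series 1 − E_m(−t) (which has zero constant term). -/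
/-- `E_m(x) = ∑_{j=0}^m x^j/j!`, the m-th partial sum of the exponential series. -/
noncomputable def Em (m : ℕ) : PowerSeries ℚ :=
  PowerSeries.mk fun j => if j ≤ m then 1 / j.factorial else 0

/-- Formal composition `Li_μ(f) = ∑_{j≥1} f^j / j^μ`, well defined coefficientwise
when `f` has zero constant term (then `coeff n (f^j) = 0` for `j > n`). -/
noncomputable def Li (μ : ℕ) (f : PowerSeries ℚ) : PowerSeries ℚ :=
  PowerSeries.mk fun n => ∑ j ∈ Finset.Icc 1 n, PowerSeries.coeff n (f ^ j) / (j : ℚ) ^ μ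

/-- Restricted poly-Bernoulli numbers. -/
noncomputable def restPolyBernoulli (μ m n : ℕ) : ℚ :=
  ∑ k ∈ Finset.range (n + 1),
    (-1 : ℚ) ^ (n - k) * k.factorial / (k + 1) ^ μ * restStirling m n k

/-!
Let `g = E_m(t) - 1`, the exponential generating function of sets whose size lies in `[1, m]`.
Splitting off the first block shows that `n! [tⁿ] gᵏ` counts ordered `k`-tuples of disjoint
blocks of sizes in `[1, m]` covering an `n`-set, that is `k! S≤m(n, k)`. As
`f := 1 - E_m(-t) = -g(-t)`, this gives `B_n / n! = [tⁿ] W(f)` for `W(z) = ∑ zᵏ / (k+1)^μ`, and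
`W(f) · f = Li_μ(f)` because substitution of `f` is a ring homomorphism sending `X` to `f`.
-/

open Finset PowerSeries Function
open scoped Nat

variable {α : Type*}

def IsDisjointCover (A : Set ℕ) (s : Finset α) {k : ℕ} (c : Fin k → Finset α) : Prop :=
  (∀ i, #(c i) ∈ A) ∧ Pairwise (Disjoint on c) ∧ ∀ x, x ∈ s ↔ ∃ i, x ∈ c i

abbrev DisjointCovers (A : Set ℕ) (s : Finset α) (k : ℕ) : Type _ :=
  {c : Fin k → Finset α // IsDisjointCover A s c}

namespace IsDisjointCover

variable {A : Set ℕ} {s : Finset α} {k : ℕ}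

theorem cons_iff [DecidableEq α] {B : Finset α} {c : Fin k → Finset α} :
    IsDisjointCover A s (Fin.cons B c) ↔ B ⊆ s ∧ #B ∈ A ∧ IsDisjointCover A (s \ B) c := by
  simp only [IsDisjointCover, Fin.forall_fin_succ, pairwise_fin_succ_iff, Fin.exists_fin_succ,
    Fin.cons_zero, Fin.cons_succ, onFun]
  constructor
  · rintro ⟨⟨hB, hc⟩, ⟨-, hBc, hcc⟩, hs⟩
    refine ⟨fun x hx => (hs x).2 (.inl hx), hB, hc, hcc, fun x => ?_⟩
    rw [mem_sdiff, hs]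
    grind [Finset.disjoint_left]
  · rintro ⟨hBs, hB, hc, hcc, hs⟩
    have hBc : ∀ i, Disjoint B (c i) := fun i =>
      Finset.disjoint_left.2 fun x hxB hxc => (mem_sdiff.1 ((hs x).2 ⟨i, hxc⟩)).2 hxB
    refine ⟨⟨hB, hc⟩, ⟨fun i => (hBc i).symm, hBc, hcc⟩, fun x => ?_⟩
    rw [← hs]
    grind

variable {c : Fin k → Finset α}

theorem injective (hA : 0 ∉ A) (hc : IsDisjointCover A s c) : Injective c :=
  injective_iff_pairwise_ne.2 fun i j hij heq => by
    have hdisj : Disjoint (c i) (c j) := hc.2.1 hij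
    rw [heq, disjoint_self] at hdisj
    exact hA (by simpa [hdisj] using hc.1 j)

theorem subset (hc : IsDisjointCover A s c) (i : Fin k) : c i ⊆ s :=
  fun x hx => (hc.2.2 x).2 ⟨i, hx⟩

variable [DecidableEq α]

def finpartition (hA : 0 ∉ A) (hc : IsDisjointCover A s c) : Finpartition s :=
  .ofExistsUnique (univ.image c) (by simpa using hc.subset)
    (fun x hx => by
      obtain ⟨i, hi⟩ := (hc.2.2 x).1 hx
      refine ⟨c i, ⟨mem_image_of_mem c (mem_univ i), hi⟩, ?_⟩
      rintro _ ⟨hb, hxb⟩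
      obtain ⟨j, -, rfl⟩ := mem_image.1 hb
      by_contra hji
      exact Finset.disjoint_left.1 (hc.2.1 (ne_of_apply_ne c hji)) hxb hi)
    (fun h => by
      obtain ⟨i, -, hi⟩ := mem_image.1 h
      exact hA (by simpa [hi] using hc.1 i))

@[simp]
theorem finpartition_parts (hA : 0 ∉ A) (hc : IsDisjointCover A s c) :
    (hc.finpartition hA).parts = univ.image c :=
  rfl

end IsDisjointCover

namespace Finpartition

variable [DecidableEq α] {s : Finset α} {k : ℕ} (P : Finpartition s) (e : Fin k ≃ P.parts)

theorem parts_eq_image : P.parts = univ.image fun i => (e i).1 := by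
  ext b
  refine ⟨fun hb => mem_image.2 ⟨e.symm ⟨b, hb⟩, mem_univ _, by simp⟩, fun hb => ?_⟩
  obtain ⟨i, -, rfl⟩ := mem_image.1 hb
  exact (e i).2

theorem isDisjointCover {A : Set ℕ} (hP : ∀ b ∈ P.parts, #b ∈ A) :
    IsDisjointCover A s fun i => (e i).1 := by
  refine ⟨fun i => hP _ (e i).2, fun i j hij => P.disjoint (e i).2 (e j).2 ?_, fun x => ⟨?_, ?_⟩⟩
  · exact fun h => hij (e.injective (Subtype.ext h))
  · intro hx
    obtain ⟨t, ht, hxt⟩ := P.exists_mem hx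
    exact ⟨e.symm ⟨t, ht⟩, by simpa using hxt⟩
  · rintro ⟨i, hi⟩
    exact P.le (e i).2 hi

end Finpartition

noncomputable def egfSizes (A : Set ℕ) : ℚ⟦X⟧ :=
  mk (A.indicator fun j => (j ! : ℚ)⁻¹)

namespace DisjointCovers

variable (A : Set ℕ) [DecidableEq α]

theorem card_eq_factorial_mul (hA : 0 ∉ A) (s : Finset α) (k : ℕ) :
    Nat.card (DisjointCovers A s k) =
      k ! * Nat.card {P : Finpartition s // #P.parts = k ∧ ∀ b ∈ P.parts, #b ∈ A} := by
  classical
  set Parts := {P : Finpartition s // #P.parts = k ∧ ∀ b ∈ P.parts, #b ∈ A}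
  let Ψ : (Σ P : Parts, Fin k ≃ P.1.parts) → DisjointCovers A s k :=
    fun p => ⟨fun i => (p.2 i).1, p.1.1.isDisjointCover p.2 p.1.2.2⟩
  have hinj : Injective Ψ := by
    rintro ⟨P, e⟩ ⟨P', e'⟩ h
    have hc : (fun i => (e i).1) = fun i => (e' i).1 := congrArg Subtype.val h
    obtain rfl : P = P' :=
      Subtype.ext (Finpartition.ext (by rw [P.1.parts_eq_image e, P'.1.parts_eq_image e', hc]))
    obtain rfl : e = e' := Equiv.ext fun i => Subtype.ext (congrFun hc i)
    rfl
  have hsurj : Surjective Ψ := by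
    rintro ⟨c, hc⟩
    let P := hc.finpartition hA
    have hmem : ∀ i, c i ∈ P.parts := fun i => by simp [P]
    let e : Fin k ≃ P.parts := Equiv.ofBijective (fun i => ⟨c i, hmem i⟩)
      ⟨fun i j h => hc.injective hA (congrArg Subtype.val h), fun ⟨b, hb⟩ => by
        simpa [P, Subtype.ext_iff] using hb⟩
    have hk : #P.parts = k := by simp [P, card_image_of_injective _ (hc.injective hA)]
    have hsizes : ∀ b ∈ P.parts, #b ∈ A := by simpa [P] using hc.1
    exact ⟨⟨⟨P, hk, hsizes⟩, e⟩, rfl⟩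
  have hperm : ∀ P : Parts, Nat.card (Fin k ≃ P.1.parts) = k ! := fun P => by
    rw [Nat.card_eq_fintype_card,
      Fintype.card_equiv (Fintype.equivFinOfCardEq (by simpa using P.2.1)).symm, Fintype.card_fin]
  rw [← Nat.card_congr (Equiv.ofBijective Ψ ⟨hinj, hsurj⟩), Nat.card_sigma,
    sum_congr rfl fun P _ => hperm P, sum_const, card_univ, smul_eq_mul, mul_comm,
    Nat.card_eq_fintype_card]

theorem card_zero (s : Finset α) :
    Nat.card (DisjointCovers A s 0) = if s = ∅ then 1 else 0 := by
  simp only [DisjointCovers, IsDisjointCover, IsEmpty.forall_iff, Pairwise, IsEmpty.exists_iff,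
    iff_false, true_and, ← eq_empty_iff_forall_notMem]
  split_ifs with h <;> simp [h]

def consEquiv (s : Finset α) (k : ℕ) :
    DisjointCovers A s (k + 1) ≃
      Σ B : {B : Finset α // B ⊆ s ∧ #B ∈ A}, DisjointCovers A (s \ B.1) k where
  toFun c :=
    have h := IsDisjointCover.cons_iff.1 ((Fin.cons_self_tail c.1).symm ▸ c.2)
    ⟨⟨c.1 0, h.1, h.2.1⟩, ⟨Fin.tail c.1, h.2.2⟩⟩
  invFun p := ⟨Fin.cons p.1.1 p.2.1, IsDisjointCover.cons_iff.2 ⟨p.1.2.1, p.1.2.2, p.2.2⟩⟩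
  left_inv c := by simp
  right_inv _ := rfl

variable [Fintype α]

theorem card_succ [DecidablePred (· ∈ A)] (s : Finset α) (k : ℕ) :
    Nat.card (DisjointCovers A s (k + 1)) =
      ∑ B ∈ s.powerset with #B ∈ A, Nat.card (DisjointCovers A (s \ B) k) := by
  rw [Nat.card_congr (consEquiv A s k), Nat.card_sigma]
  exact (sum_subtype _ (by simp) fun B => Nat.card (DisjointCovers A (s \ B) k)).symm

theorem card_eq_coeff (s : Finset α) (k : ℕ) :
    (Nat.card (DisjointCovers A s k) : ℚ) = (#s)! * coeff #s (egfSizes A ^ k) := by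
  classical
  induction k generalizing s with
  | zero =>
    rw [card_zero, pow_zero, coeff_one]
    by_cases h : s = ∅ <;> simp [h]
  | succ k ih =>
    rw [card_succ, Nat.cast_sum, sum_filter,
      sum_congr rfl fun B hB => by rw [ih, card_sdiff_of_subset (mem_powerset.1 hB)],
      sum_powerset_apply_card
        (fun j => if j ∈ A then ((#s - j)! : ℚ) * coeff (#s - j) (egfSizes A ^ k) else 0),
      pow_succ', coeff_mul, Nat.sum_antidiagonal_eq_sum_range_succ_mk, mul_sum]
    refine sum_congr rfl fun j hj => ?_
    have hjs : j ≤ #s := Nat.lt_succ_iff.1 (mem_range.1 hj)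
    simp only [egfSizes, coeff_mk, Set.indicator_apply, nsmul_eq_mul, Nat.cast_choose ℚ hjs]
    split_ifs
    · field_simp
    · simp

end DisjointCovers

namespace PowerSeries

variable {R : Type*} [CommRing R]

theorem coeff_subst_eq_sum_range {f : R⟦X⟧} (hf : constantCoeff f = 0) (g : R⟦X⟧) (n : ℕ) :
    coeff n (g.subst f) = ∑ d ∈ range (n + 1), coeff d g * coeff n (f ^ d) := by
  simp_rw [coeff_subst' (HasSubst.of_constantCoeff_zero' hf), smul_eq_mul]
  refine finsum_eq_sum_of_support_subset _ fun d hd => mem_range.2 ?_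
  by_contra! h
  exact hd (by simp [X_pow_dvd_iff.1 (pow_dvd_pow_of_dvd (X_dvd_iff.2 hf) d) n h])

end PowerSeries

noncomputable def polylogDivX (μ : ℕ) : ℚ⟦X⟧ :=
  mk fun k => ((k + 1 : ℚ) ^ μ)⁻¹

theorem Li_eq_subst {f : ℚ⟦X⟧} (hf : constantCoeff f = 0) (μ : ℕ) :
    Li μ f = (X * polylogDivX μ).subst f := by
  ext n
  rw [coeff_subst_eq_sum_range hf, sum_range_succ', Li, coeff_mk, ← Ico_add_one_right_eq_Icc,
    sum_Ico_eq_sum_range, add_tsub_cancel_right]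
  simp [polylogDivX, coeff_succ_X_mul, add_comm 1, div_eq_inv_mul]

theorem subst_polylogDivX_mul_eq_Li {f : ℚ⟦X⟧} (hf : constantCoeff f = 0) (μ : ℕ) :
    (polylogDivX μ).subst f * f = Li μ f := by
  rw [Li_eq_subst hf, subst_mul (HasSubst.of_constantCoeff_zero' hf),
    subst_X (HasSubst.of_constantCoeff_zero' hf), mul_comm]

theorem restStirling_eq_card (m n k : ℕ) :
    restStirling m n k = Nat.card {P : Finpartition (univ : Finset (Fin n)) //
      #P.parts = k ∧ ∀ b ∈ P.parts, #b ∈ Set.Icc 1 m} :=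
  Nat.card_congr <| Equiv.subtypeEquivRight fun P => and_congr_right' <| forall₂_congr
    fun b hb => by simp [Set.mem_Icc, P.nonempty_of_mem_parts hb]

theorem coeff_egfSizes_Icc_pow (m n k : ℕ) :
    coeff n (egfSizes (Set.Icc 1 m) ^ k) = k ! * restStirling m n k / n ! := by
  have h := DisjointCovers.card_eq_coeff (Set.Icc 1 m) (univ : Finset (Fin n)) k
  rw [DisjointCovers.card_eq_factorial_mul _ (by simp), ← restStirling_eq_card, card_univ,
    Fintype.card_fin] at h
  rw [eq_div_iff (by positivity), mul_comm, ← h]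
  push_cast
  ring

theorem one_sub_rescale_Em (m : ℕ) :
    1 - rescale (-1 : ℚ) (Em m) = -rescale (-1 : ℚ) (egfSizes (Set.Icc 1 m)) := by
  ext j
  rw [map_sub, map_neg, coeff_one, coeff_rescale, coeff_rescale]
  rcases j with _ | j <;> simp [Em, egfSizes, Set.indicator_apply]

theorem coeff_one_sub_rescale_Em_pow (m : ℕ) {n k : ℕ} (hkn : k ≤ n) :
    coeff n ((1 - rescale (-1 : ℚ) (Em m)) ^ k) =
      (-1 : ℚ) ^ (n - k) * k ! * restStirling m n k / n ! := by
  obtain ⟨j, rfl⟩ := Nat.exists_eq_add_of_le hkn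
  have hsign : (-1 : ℚ) ^ k * (-1) ^ k = 1 := by rw [← pow_add, Even.neg_one_pow ⟨k, rfl⟩]
  rw [one_sub_rescale_Em, neg_pow, ← map_pow, ← map_one C, ← map_neg, ← map_pow, coeff_C_mul,
    coeff_rescale, coeff_egfSizes_Icc_pow, Nat.add_sub_cancel_left, pow_add]
  linear_combination ((-1) ^ j * k ! * restStirling m (k + j) k / (k + j)! : ℚ) * hsign

theorem constantCoeff_one_sub_rescale_Em (m : ℕ) :
    constantCoeff (1 - rescale (-1 : ℚ) (Em m)) = 0 := by
  rw [← coeff_zero_eq_constantCoeff_apply, map_sub, coeff_rescale]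
  simp [Em]

theorem egf_restPolyBernoulli (μ m : ℕ) :
    mk (fun n => restPolyBernoulli μ m n / n !) =
      (polylogDivX μ).subst (1 - rescale (-1 : ℚ) (Em m)) := by
  ext n
  rw [coeff_mk, coeff_subst_eq_sum_range (constantCoeff_one_sub_rescale_Em m), restPolyBernoulli,
    sum_div]
  refine sum_congr rfl fun k hk => ?_
  rw [coeff_one_sub_rescale_Em_pow m (Nat.lt_succ_iff.1 (mem_range.1 hk)), polylogDivX, coeff_mk]
  ring

theorem restPolyBernoulli_egf_general (μ m : ℕ) :
    PowerSeries.mk (fun n => restPolyBernoulli μ m n / n.factorial) *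
        (1 - PowerSeries.rescale (-1 : ℚ) (Em m)) =
      Li μ (1 - PowerSeries.rescale (-1 : ℚ) (Em m)) := by
  rw [egf_restPolyBernoulli, subst_polylogDivX_mul_eq_Li (constantCoeff_one_sub_rescale_Em m)]

theorem restPolyBernoulli_egf (μ m : ℕ) (hμ : 1 ≤ μ) (hm : 1 ≤ m) :
    PowerSeries.mk (fun n => restPolyBernoulli μ m n / n.factorial) *
        (1 - PowerSeries.rescale (-1 : ℚ) (Em m)) =
      Li μ (1 - PowerSeries.rescale (-1 : ℚ) (Em m)) :=
  restPolyBernoulli_egf_general μ m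
end

section
/- As formal power series over ℚ in t, ∑_{n=0}^∞ B^{(μ)}_{n,≥m} t^n/n! · (E_{m−1}(−t) − e^{−t}) = Li_μ(E_{m−1}(−t) − e^{−t}), where B^{(μ)}_{n,≥m} = ∑_{k=0}^{n} (−1)^{n−k} k!/(k+1)^μ · S≥m(n, k), E_{m−1}(x) = ∑_{j=0}^{m−1} x^j/j!, e^{−t} is the formal exponential series in −t, and Li_μ(z) = ∑_{j≥1} z^j/j^μ composed formally. -/
/-- Associated poly-Bernoulli numbers. -/
noncomputable def assocPolyBernoulli (μ m n : ℕ) : ℚ :=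
  ∑ k ∈ Finset.range (n + 1),
    (-1 : ℚ) ^ (n - k) * k.factorial / (k + 1) ^ μ * assocStirling m n k

/-!
The series `e^t - E_{m-1}(t) = ∑_{j ≥ m} t^j / j!` is the exponential generating function of
sets with at least `m` elements, so `n!` times the `t^n`-coefficient of its `k`-th power counts
the maps `Fin n → Fin k` all of whose fibres have at least `m` elements. For `m ≥ 1` such a map
is surjective and amounts to a partition into `k` blocks of size `≥ m` together with an ordering
of the blocks, so this count is `k! S≥m(n, k)`. As `f = E_{m-1}(-t) - e^{-t}` is that series
at `-t`, negated, `[t^n] f^k = (-1)^(n-k) k! S≥m(n, k) / n!`. Hence the generating function of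
the associated poly-Bernoulli numbers is `∑_k f^k / (k+1)^μ`, and multiplying it by `f` gives
`∑_{j ≥ 1} f^j / j^μ = Li_μ(f)`.
-/

open Finset PowerSeries

abbrev LargeFiberMap (m k : ℕ) (α : Type*) [Fintype α] :=
  {φ : α → Fin k // ∀ i, m ≤ #{x | φ x = i}}

abbrev LargePartFinpartition (m k : ℕ) (α : Type*) [Fintype α] [DecidableEq α] :=
  {P : Finpartition (univ : Finset α) // #P.parts = k ∧ ∀ b ∈ P.parts, m ≤ #b}

section CountingByLastFiber

theorem card_largeFiberMap_congr {α β : Type*} [Fintype α] [Fintype β] (m k : ℕ)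
    (e : α ≃ β) :
    Nat.card (LargeFiberMap m k α) = Nat.card (LargeFiberMap m k β) := by
  refine Nat.card_congr <| (e.arrowCongr (Equiv.refl _)).subtypeEquiv fun φ =>
    forall_congr' fun i => ?_
  rw [← Fintype.card_subtype, ← Fintype.card_subtype]
  exact iff_of_eq (congrArg _ (Fintype.card_congr (e.subtypeEquiv (by simp))))

theorem card_largeFiberMap_zero {α : Type*} [Fintype α] (m : ℕ) :
    Nat.card (LargeFiberMap m 0 α) = if Fintype.card α = 0 then 1 else 0 := by
  split_ifs with h
  · have := Fintype.card_eq_zero_iff.mp h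
    rw [Nat.card_congr (Equiv.subtypeUnivEquiv fun φ i => i.elim0), Nat.card_unique]
  · have := Fintype.card_pos_iff.mp (Nat.pos_of_ne_zero h)
    exact Nat.card_of_isEmpty

variable {α : Type*} [Fintype α] [DecidableEq α] {m k : ℕ}

section extendByLast

variable (S : Finset α) (ψ : {x // x ∉ S} → Fin k)

def extendByLast : α → Fin (k + 1) :=
  fun x => if h : x ∈ S then Fin.last k else (ψ ⟨x, h⟩).castSucc

theorem filter_extendByLast_eq_last :
    ({x | extendByLast S ψ x = Fin.last k} : Finset α) = S := by
  ext x
  by_cases hx : x ∈ S <;> simp [extendByLast, hx, Fin.castSucc_ne_last]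

theorem card_filter_extendByLast_eq_castSucc (j : Fin k) :
    #{x | extendByLast S ψ x = j.castSucc} = #{y | ψ y = j} := by
  symm
  refine card_bij (fun y _ => y.1) (fun y hy => ?_) (fun _ _ _ _ => Subtype.ext) fun x hx => ?_
  · simp only [mem_filter, mem_univ, true_and] at hy ⊢
    simpa [extendByLast, y.2]
  · simp only [mem_filter, mem_univ, true_and] at hx ⊢
    have hxS : x ∉ S := fun h => by simp [extendByLast, h, eq_comm] at hx
    exact ⟨⟨x, hxS⟩, by simpa [extendByLast, hxS] using hx, rfl⟩

end extendByLast

def LargeFiberMap.ofLastFiber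
    (p : Σ S : {S : Finset α // m ≤ #S}, LargeFiberMap m k {x // x ∉ S.1}) :
    LargeFiberMap m (k + 1) α :=
  ⟨extendByLast p.1.1 p.2.1, Fin.lastCases
    (by rw [filter_extendByLast_eq_last]; exact p.1.2)
    (fun j => by rw [card_filter_extendByLast_eq_castSucc]; exact p.2.2 j)⟩

theorem LargeFiberMap.ofLastFiber_injective :
    Function.Injective (LargeFiberMap.ofLastFiber (α := α) (m := m) (k := k)) := by
  rintro ⟨S, ψ⟩ ⟨S', ψ'⟩ h
  have h : extendByLast S.1 ψ.1 = extendByLast S'.1 ψ'.1 := congrArg Subtype.val h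
  obtain rfl : S = S' := Subtype.ext <| by
    rw [← filter_extendByLast_eq_last S.1 ψ.1, ← filter_extendByLast_eq_last S'.1 ψ'.1, h]
  obtain rfl : ψ = ψ' := Subtype.ext <| funext fun y => Fin.castSucc_injective _ <| by
    simpa [extendByLast, y.2] using congrFun h y.1
  rfl

theorem LargeFiberMap.ofLastFiber_surjective :
    Function.Surjective (LargeFiberMap.ofLastFiber (α := α) (m := m) (k := k)) := by
  intro φ
  set S : Finset α := {x | φ.1 x = Fin.last k}
  let ψ : {x // x ∉ S} → Fin k := fun y => (φ.1 y).castPred (by simpa [S] using y.2)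
  have hφ : extendByLast S ψ = φ.1 := funext fun x => by
    by_cases hx : x ∈ S
    · simp only [extendByLast, dif_pos hx]
      exact ((mem_filter.1 hx).2).symm
    · simp [extendByLast, hx, ψ]
  refine ⟨⟨⟨S, φ.2 _⟩, ψ, fun j => ?_⟩, Subtype.ext hφ⟩
  rw [← card_filter_extendByLast_eq_castSucc, hφ]
  exact φ.2 _

variable (m k α) in
theorem card_largeFiberMap_succ :
    Nat.card (LargeFiberMap m (k + 1) α) = ∑ b ∈ range (Fintype.card α + 1),
      (Fintype.card α).choose b *
        if m ≤ b then Nat.card (LargeFiberMap m k (Fin (Fintype.card α - b))) else 0 := by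
  rw [← Nat.card_eq_of_bijective _ ⟨LargeFiberMap.ofLastFiber_injective,
    LargeFiberMap.ofLastFiber_surjective⟩, Nat.card_sigma]
  have hcompl (S : Finset α) : Nat.card (LargeFiberMap m k {x // x ∉ S}) =
      Nat.card (LargeFiberMap m k (Fin (Fintype.card α - #S))) :=
    card_largeFiberMap_congr m k (Fintype.equivFinOfCardEq (by simp [Fintype.card_subtype_compl]))
  simp_rw [hcompl]
  rw [← Finset.sum_subtype {S | m ≤ #S} (by simp)
      fun S => Nat.card (LargeFiberMap m k (Fin (Fintype.card α - #S))),
    sum_filter, ← powerset_univ, sum_powerset_apply_card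
      fun b => if m ≤ b then Nat.card (LargeFiberMap m k (Fin (Fintype.card α - b))) else 0]
  simp [card_univ]

end CountingByLastFiber

section CountingByPartitions

variable {α β : Type*} [Fintype α] [DecidableEq α] [DecidableEq β] {m k : ℕ}

def kerFinpartition (φ : α → β) : Finpartition (univ : Finset α) :=
  letI : DecidableRel (Setoid.ker φ) := fun a b => decEq (φ a) (φ b)
  Finpartition.ofSetoid (Setoid.ker φ)

theorem part_kerFinpartition (φ : α → β) (a : α) :
    (kerFinpartition φ).part a = ({b | φ b = φ a} : Finset α) := by
  ext b
  simp [kerFinpartition, Finpartition.mem_part_ofSetoid_iff_rel, Setoid.ker, eq_comm]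

theorem parts_kerFinpartition [Fintype β] {φ : α → β} (hφ : Function.Surjective φ) :
    (kerFinpartition φ).parts = univ.image fun i => ({b | φ b = i} : Finset α) := by
  ext t
  simp only [mem_image, mem_univ, true_and]
  constructor
  · intro ht
    obtain ⟨a, -, rfl⟩ := (kerFinpartition φ).part_surjOn ht
    exact ⟨φ a, (part_kerFinpartition φ a).symm⟩
  · rintro ⟨i, rfl⟩
    obtain ⟨a, rfl⟩ := hφ i
    rw [← part_kerFinpartition φ a]
    exact (kerFinpartition φ).part_mem.2 (mem_univ a)

omit [DecidableEq α] in
theorem injective_filter_eq_of_surjective {φ : α → β} (hφ : Function.Surjective φ) :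
    Function.Injective fun i => ({x | φ x = i} : Finset α) := fun i j hij => by
  obtain ⟨a, rfl⟩ := hφ i
  simpa using (Finset.ext_iff.1 hij a).1 (by simp)

def Finpartition.index (P : Finpartition (univ : Finset α)) (e : β ≃ P.parts) (x : α) : β :=
  e.symm ⟨P.part x, P.part_mem.2 (mem_univ x)⟩

theorem Finpartition.filter_index_eq [Fintype β] (P : Finpartition (univ : Finset α))
    (e : β ≃ P.parts) (i : β) : ({x | P.index e x = i} : Finset α) = e i := by
  ext x
  simp [Finpartition.index, Equiv.symm_apply_eq, Subtype.ext_iff, P.part_eq_iff_mem (e i).2]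

namespace LargeFiberMap

omit [DecidableEq α] in
theorem surjective (hm : 1 ≤ m) (φ : LargeFiberMap m k α) : Function.Surjective φ.1 := by
  intro i
  obtain ⟨x, hx⟩ := card_pos.1 (hm.trans (φ.2 i))
  exact ⟨x, (mem_filter.1 hx).2⟩

def ofOrderedPartition (p : Σ P : LargePartFinpartition m k α, Fin k ≃ P.1.parts) :
    LargeFiberMap m k α :=
  ⟨p.1.1.index p.2, fun i => by
    rw [Finpartition.filter_index_eq]
    exact p.1.2.2 _ (p.2 i).2⟩

theorem ofOrderedPartition_injective :
    Function.Injective (ofOrderedPartition (m := m) (k := k) (α := α)) := by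
  rintro ⟨⟨P, hP⟩, e⟩ ⟨⟨Q, hQ⟩, f⟩ h
  have hef (i : Fin k) : (e i).1 = (f i).1 := by
    rw [← P.filter_index_eq e, ← Q.filter_index_eq f]
    exact congrArg (fun φ => ({x | φ x = i} : Finset α)) (congrArg Subtype.val h)
  obtain rfl : P = Q := Finpartition.ext <| Finset.ext fun t => by
    refine ⟨fun ht => ?_, fun ht => ?_⟩
    · simpa [← hef] using (f (e.symm ⟨t, ht⟩)).2
    · simpa [hef] using (e (f.symm ⟨t, ht⟩)).2
  obtain rfl : e = f := Equiv.ext fun i => Subtype.ext (hef i)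
  rfl

theorem ofOrderedPartition_surjective (hm : 1 ≤ m) :
    Function.Surjective (ofOrderedPartition (m := m) (k := k) (α := α)) := by
  intro φ
  have hφ := φ.surjective hm
  have hparts := parts_kerFinpartition hφ
  let e : Fin k ≃ (kerFinpartition φ.1).parts :=
    Equiv.ofBijective
      (fun i => ⟨({x | φ.1 x = i} : Finset α), hparts ▸ mem_image_of_mem _ (mem_univ i)⟩)
      ⟨fun i j hij => injective_filter_eq_of_surjective hφ (congrArg Subtype.val hij),
        fun ⟨t, ht⟩ => by
          obtain ⟨i, -, rfl⟩ := mem_image.1 (hparts ▸ ht)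
          exact ⟨i, rfl⟩⟩
  refine ⟨⟨⟨kerFinpartition φ.1, ?_, ?_⟩, e⟩, Subtype.ext <| funext fun x => ?_⟩
  · rw [hparts, card_image_of_injective _ (injective_filter_eq_of_surjective hφ), card_univ,
      Fintype.card_fin]
  · rw [hparts]
    rintro _ hb
    obtain ⟨i, -, rfl⟩ := mem_image.1 hb
    exact φ.2 i
  · show e.symm _ = _
    rw [Equiv.symm_apply_eq]
    exact Subtype.ext (part_kerFinpartition φ.1 x)

end LargeFiberMap

theorem card_largeFiberMap (hm : 1 ≤ m) :
    Nat.card (LargeFiberMap m k α) = Nat.card (LargePartFinpartition m k α) * k.factorial := by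
  rw [← Nat.card_eq_of_bijective _ ⟨LargeFiberMap.ofOrderedPartition_injective,
    LargeFiberMap.ofOrderedPartition_surjective hm⟩, Nat.card_sigma]
  have hord (P : LargePartFinpartition m k α) : Nat.card (Fin k ≃ P.1.parts) = k.factorial := by
    rw [Nat.card_eq_fintype_card, Fintype.card_equiv (Fintype.equivOfCardEq (by simp [P.2.1])),
      Fintype.card_fin]
  rw [Finset.sum_congr rfl fun P _ => hord P, sum_const, card_univ, smul_eq_mul,
    Nat.card_eq_fintype_card]

end CountingByPartitions

section PowerSeries

variable {R : Type*} [CommRing R]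

theorem coeff_neg_rescale_neg_one_pow (g : R⟦X⟧) (k n : ℕ) :
    coeff n ((-rescale (-1 : R) g) ^ k) = (-1) ^ (n + k) * coeff n (g ^ k) := by
  have hC : (-1 : R⟦X⟧) ^ k = C ((-1) ^ k) := by simp
  rw [neg_pow, hC, ← map_pow, coeff_C_mul, coeff_rescale, pow_add]
  ring

theorem coeff_pow_eq_zero_of_lt {f : R⟦X⟧} (hf : constantCoeff f = 0) {n k : ℕ} (h : n < k) :
    coeff n (f ^ k) = 0 :=
  coeff_of_lt_order n <| (Nat.cast_lt.2 h).trans_le (le_order_pow_of_constantCoeff_eq_zero k hf)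

-- The left factor is the composition `(∑ₖ c k Xᵏ) ∘ f`.
theorem coeff_mk_sum_coeff_pow_mul {f : R⟦X⟧} (hf : constantCoeff f = 0) (c : ℕ → R)
    (n : ℕ) :
    coeff n ((mk fun a => ∑ k ∈ range (a + 1), c k * coeff a (f ^ k)) * f) =
      ∑ k ∈ range n, c k * coeff n (f ^ (k + 1)) := by
  suffices coeff n ((mk fun a => ∑ k ∈ range (a + 1), c k * coeff a (f ^ k)) * f) =
      ∑ k ∈ range (n + 1), c k * coeff n (f ^ (k + 1)) by
    rw [this, sum_range_succ, coeff_pow_eq_zero_of_lt hf n.lt_succ_self, mul_zero, add_zero]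
  simp_rw [pow_succ, coeff_mul, coeff_mk, mul_sum, sum_mul]
  rw [sum_comm]
  refine sum_congr rfl fun ab hab => ?_
  have ha : ab.1 + 1 ≤ n + 1 := by have := mem_antidiagonal.1 hab; omega
  rw [← sum_subset (range_subset_range.2 ha) fun k _ hk => ?_]
  · exact sum_congr rfl fun k _ => by ring
  · rw [coeff_pow_eq_zero_of_lt hf (by simpa using hk)]
    ring

end PowerSeries

noncomputable def expTail (m : ℕ) : ℚ⟦X⟧ :=
  mk fun j => if m ≤ j then (j.factorial : ℚ)⁻¹ else 0

theorem coeff_expTail (m j : ℕ) :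
    coeff j (expTail m) = if m ≤ j then (j.factorial : ℚ)⁻¹ else 0 :=
  coeff_mk _ _

theorem exp_sub_Em {m : ℕ} (hm : 1 ≤ m) : exp ℚ - Em (m - 1) = expTail m := by
  ext j
  rw [map_sub, coeff_exp, Em, coeff_mk, coeff_expTail]
  split_ifs <;> first | omega | simp

theorem factorial_mul_coeff_expTail_pow (m k n : ℕ) :
    (n.factorial : ℚ) * coeff n (expTail m ^ k) = Nat.card (LargeFiberMap m k (Fin n)) := by
  induction k generalizing n with
  | zero =>
    rw [pow_zero, coeff_one, card_largeFiberMap_zero, Fintype.card_fin]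
    split_ifs <;> simp_all
  | succ k ih =>
    rw [pow_succ', coeff_mul, Nat.sum_antidiagonal_eq_sum_range_succ_mk, card_largeFiberMap_succ,
      Fintype.card_fin, mul_sum, Nat.cast_sum]
    refine sum_congr rfl fun b hb => ?_
    have hbn : b ≤ n := Nat.lt_succ_iff.1 (mem_range.1 hb)
    rw [coeff_expTail]
    split_ifs
    · rw [← Nat.choose_mul_factorial_mul_factorial hbn]
      push_cast
      rw [← ih]
      field_simp
    · simp

theorem coeff_expTail_pow {m : ℕ} (hm : 1 ≤ m) (k n : ℕ) :
    coeff n (expTail m ^ k) = assocStirling m n k * k.factorial / n.factorial := by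
  rw [eq_div_iff (by positivity), mul_comm, factorial_mul_coeff_expTail_pow, card_largeFiberMap hm]
  push_cast
  rfl

theorem assocPolyBernoulli_div_factorial {m : ℕ} (hm : 1 ≤ m) (μ n : ℕ) :
    assocPolyBernoulli μ m n / n.factorial = ∑ k ∈ range (n + 1),
      (((k : ℚ) + 1) ^ μ)⁻¹ * coeff n ((-rescale (-1 : ℚ) (expTail m)) ^ k) := by
  rw [assocPolyBernoulli, sum_div]
  refine sum_congr rfl fun k hk => ?_
  rw [coeff_neg_rescale_neg_one_pow, coeff_expTail_pow hm,
    show n + k = n - k + 2 * k by have := mem_range.1 hk; omega, pow_add, pow_mul]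
  simp only [neg_one_sq, one_pow, mul_one]
  ring

theorem assocPolyBernoulli_egf_general (μ m : ℕ) (hm : 1 ≤ m) :
    PowerSeries.mk (fun n => assocPolyBernoulli μ m n / n.factorial) *
        (PowerSeries.rescale (-1 : ℚ) (Em (m - 1)) -
          PowerSeries.rescale (-1 : ℚ) (PowerSeries.exp ℚ)) =
      Li μ (PowerSeries.rescale (-1 : ℚ) (Em (m - 1)) -
        PowerSeries.rescale (-1 : ℚ) (PowerSeries.exp ℚ)) := by
  have hf : rescale (-1 : ℚ) (Em (m - 1)) - rescale (-1 : ℚ) (exp ℚ) =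
      -rescale (-1 : ℚ) (expTail m) := by
    rw [← exp_sub_Em hm, map_sub, neg_sub]
  have hf0 : constantCoeff (-rescale (-1 : ℚ) (expTail m)) = 0 := by
    rw [← coeff_zero_eq_constantCoeff_apply, map_neg, coeff_rescale, coeff_expTail,
      if_neg (by omega), mul_zero, neg_zero]
  rw [hf]
  simp_rw [assocPolyBernoulli_div_factorial hm]
  ext n
  rw [coeff_mk_sum_coeff_pow_mul hf0, Li, coeff_mk, ← Ico_add_one_right_eq_Icc,
    sum_Ico_eq_sum_range, add_tsub_cancel_right]
  refine sum_congr rfl fun k _ => ?_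
  rw [add_comm 1 k]
  push_cast
  ring

theorem assocPolyBernoulli_egf (μ m : ℕ) (hμ : 1 ≤ μ) (hm : 1 ≤ m) :
    PowerSeries.mk (fun n => assocPolyBernoulli μ m n / n.factorial) *
        (PowerSeries.rescale (-1 : ℚ) (Em (m - 1)) -
          PowerSeries.rescale (-1 : ℚ) (PowerSeries.exp ℚ)) =
      Li μ (PowerSeries.rescale (-1 : ℚ) (Em (m - 1)) -
        PowerSeries.rescale (-1 : ℚ) (PowerSeries.exp ℚ)) :=
  assocPolyBernoulli_egf_general μ m hm
end
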